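/- Let M' be a stable matching in G' and M = T(M') its projection to G. Define f(a) = 0 if (a_1, d(a)) ∈ M' and f(a) = 1 otherwise, and f(b) = 1 if M'(b) ∈ A_1 and f(b) = 0 otherwise. Then: (1) every edge (a,b) of G labeled (+,+) with respect to M satisfies f(a) = 0 and f(b) = 1; and (2) every edge (y,z) of G with f(y) = 1 and f(z) = 0 is labeled (−,−) with respect to M. -/
import Mathlib


open Classical

/-- A bipartite graph `G = (A ∪ B, E)` with strict preference lists:
`adj` is the edge relation, and each vertex ranks its neighbors by a rank
function (lower rank = more preferred), injective on neighbors. -/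
structure PrefSys (A B : Type) where
  adj : A → B → Prop
  rankA : A → B → ℕ
  rankB : B → A → ℕ
  rankA_inj : ∀ a b b', adj a b → adj a b' → rankA a b = rankA a b' → b = b'
  rankB_inj : ∀ b a a', adj a b → adj a' b → rankB b a = rankB b a' → a = a'

namespace PrefSys

variable {A B : Type} (P : PrefSys A B)

/-- `M` is a matching of `G`: a set of edges, no two sharing a vertex. -/
def IsMatching (M : Finset (A × B)) : Prop :=
  (∀ p ∈ M, P.adj p.1 p.2) ∧
  (∀ p ∈ M, ∀ q ∈ M, p.1 = q.1 → p = q) ∧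
  (∀ p ∈ M, ∀ q ∈ M, p.2 = q.2 → p = q)

/-- Vertex `a ∈ A` prefers matching `M` to matching `M'`:
`a` is matched in `M` and either unmatched in `M'` or matched to a strictly
worse partner in `M'`. -/
def prefA (M M' : Finset (A × B)) (a : A) : Prop :=
  ∃ b, (a, b) ∈ M ∧ ∀ b', (a, b') ∈ M' → P.rankA a b < P.rankA a b'

/-- Vertex `b ∈ B` prefers matching `M` to matching `M'`. -/
def prefB (M M' : Finset (A × B)) (b : B) : Prop :=
  ∃ a, (a, b) ∈ M ∧ ∀ a', (a', b) ∈ M' → P.rankB b a < P.rankB b a'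

/-- `φ(M, M')`: the number of vertices preferring `M` to `M'`. -/
noncomputable def phi (M M' : Finset (A × B)) : ℕ :=
  Nat.card {a : A // P.prefA M M' a} + Nat.card {b : B // P.prefB M M' b}

/-- A matching is popular if it never loses a head-to-head election. -/
def Popular (M : Finset (A × B)) : Prop :=
  P.IsMatching M ∧ ∀ M', P.IsMatching M' → P.phi M' M ≤ P.phi M M'

/-- `a`'s vote on the edge `(a,b)` versus its `M`-partner is `+`. -/
def voteAplus (M : Finset (A × B)) (a : A) (b : B) : Prop :=
  ∀ b', (a, b') ∈ M → P.rankA a b < P.rankA a b'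

/-- `b`'s vote on the edge `(a,b)` versus its `M`-partner is `+`. -/
def voteBplus (M : Finset (A × B)) (a : A) (b : B) : Prop :=
  ∀ a', (a', b) ∈ M → P.rankB b a < P.rankB b a'

/-- `(a,b)` is a blocking edge (an edge outside `M` labeled `(+,+)`). -/
def Blocking (M : Finset (A × B)) (a : A) (b : B) : Prop :=
  P.adj a b ∧ (a, b) ∉ M ∧ P.voteAplus M a b ∧ P.voteBplus M a b

/-- A stable matching: a matching with no blocking edge. -/
def Stable (M : Finset (A × B)) : Prop :=
  P.IsMatching M ∧ ∀ a b, ¬ P.Blocking M a b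

/-- A dominant matching: popular, and more popular than every larger matching. -/
def Dominant (M : Finset (A × B)) : Prop :=
  P.Popular M ∧ ∀ M', P.IsMatching M' → M.card < M'.card → P.phi M' M < P.phi M M'

/-- The edge `(a,b)` survives in the subgraph `G_M` (i.e. it is an edge of `G`
that is in `M` or is not labeled `(-,-)`). -/
def inGM (M : Finset (A × B)) (a : A) (b : B) : Prop :=
  P.adj a b ∧ ((a, b) ∈ M ∨ P.voteAplus M a b ∨ P.voteBplus M a b)

end PrefSys

namespace PrefSys

/-- The auxiliary graph `G'` of `G`: men come in two copies `a₀` (`Sum.inl a`)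
and `a₁` (`Sum.inr a`); women are the original women `b` (`Sum.inl b`) together
with a dummy woman `d(a)` (`Sum.inr a`) for each man `a`.  `d(a)` is adjacent
only to `a₀` and `a₁` and prefers `a₀`; `a₀` ranks `a`'s neighbors in `a`'s
original order followed last by `d(a)`; `a₁` ranks `d(a)` first and then `a`'s
neighbors in original order; each woman `b` prefers every level-1 man to every
level-0 man, each level ordered by `b`'s original preferences. -/
noncomputable def aux {A B : Type} [Fintype A] [Fintype B] (P : PrefSys A B) :
    PrefSys (A ⊕ A) (B ⊕ A) where
  adj x y :=
    match x, y with
    | .inl a, .inl b => P.adj a b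
    | .inl a, .inr a' => a' = a
    | .inr a, .inl b => P.adj a b
    | .inr a, .inr a' => a' = a
  rankA x y :=
    match x, y with
    | .inl a, .inl b => P.rankA a b
    | .inl a, .inr _ => (Finset.univ.sup (P.rankA a)) + 1
    | .inr a, .inl b => P.rankA a b + 1
    | .inr _, .inr _ => 0
  rankB y x :=
    match y, x with
    | .inl b, .inl a => P.rankB b a + (Finset.univ.sup (P.rankB b)) + 1
    | .inl b, .inr a => P.rankB b a
    | .inr _, .inl _ => 0
    | .inr _, .inr _ => 1
  rankA_inj := by
    rintro (a | a) (b | a') (b' | a'') h1 h2 heq <;> dsimp only at h1 h2 heq ⊢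
    · exact congrArg Sum.inl (P.rankA_inj a b b' h1 h2 heq)
    · exfalso
      have := Finset.le_sup (f := P.rankA a) (Finset.mem_univ b); omega
    · exfalso
      have := Finset.le_sup (f := P.rankA a) (Finset.mem_univ b'); omega
    · rw [h1, h2]
    · exact congrArg Sum.inl (P.rankA_inj a b b' h1 h2 (by omega))
    · exfalso; omega
    · exfalso; omega
    · rw [h1, h2]
  rankB_inj := by
    rintro (b | a) (a' | a'') (a''' | a'''') h1 h2 heq <;> dsimp only at h1 h2 heq ⊢
    · exact congrArg Sum.inl (P.rankB_inj b a' a''' h1 h2 (by omega))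
    · exfalso
      have := Finset.le_sup (f := P.rankB b) (Finset.mem_univ a''''); omega
    · exfalso
      have := Finset.le_sup (f := P.rankB b) (Finset.mem_univ a''); omega
    · exact congrArg Sum.inr (P.rankB_inj b a'' a'''' h1 h2 heq)
    · rw [← h1, ← h2]
    · exfalso; omega
    · exfalso; omega
    · rw [← h1, ← h2]

/-- The projection of an edge of `G'` to an edge of `G` (dummy edges ↦ none). -/
def proj {A B : Type} : ((A ⊕ A) × (B ⊕ A)) → Option (A × B)
  | (.inl a, .inl b) => some (a, b)
  | (.inr a, .inl b) => some (a, b)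
  | _ => none

/-- `T(M')`: delete the edges incident to dummy women and replace each edge
`(aᵢ, b)` with `b ∈ B` by `(a, b)`. -/
noncomputable def Tmap {A B : Type} (M' : Finset ((A ⊕ A) × (B ⊕ A))) :
    Finset (A × B) :=
  (M'.image proj).filterMap id (by
    intro o o' x hx hx'
    rw [id] at hx hx'
    rw [Option.mem_def] at hx hx'
    rw [hx, hx'])

end PrefSys

namespace PrefSys

variable {A B : Type} [Fintype A] [Fintype B] (P : PrefSys A B)

lemma aux_rankA_ll (a : A) (b : B) : (P.aux).rankA (.inl a) (.inl b) = P.rankA a b := rfl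
lemma aux_rankA_lr (a a' : A) :
    (P.aux).rankA (.inl a) (.inr a') = (Finset.univ.sup (P.rankA a)) + 1 := rfl
lemma aux_rankA_rl (a : A) (b : B) : (P.aux).rankA (.inr a) (.inl b) = P.rankA a b + 1 := rfl
lemma aux_rankA_rr (a a' : A) : (P.aux).rankA (.inr a) (.inr a') = 0 := rfl
lemma aux_rankB_ll (b : B) (a : A) :
    (P.aux).rankB (.inl b) (.inl a) = P.rankB b a + (Finset.univ.sup (P.rankB b)) + 1 := rfl
lemma aux_rankB_lr (b : B) (a : A) : (P.aux).rankB (.inl b) (.inr a) = P.rankB b a := rfl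
lemma aux_adj_ll (a : A) (b : B) : (P.aux).adj (.inl a) (.inl b) = P.adj a b := rfl
lemma aux_adj_rl (a : A) (b : B) : (P.aux).adj (.inr a) (.inl b) = P.adj a b := rfl

lemma mem_Tmap {A B : Type} (M' : Finset ((A ⊕ A) × (B ⊕ A))) (a : A) (b : B) :
    (a, b) ∈ Tmap M' ↔ (Sum.inl a, Sum.inl b) ∈ M' ∨ (Sum.inr a, Sum.inl b) ∈ M' := by
  unfold Tmap
  simp only [Finset.mem_filterMap, Finset.mem_image, id_eq, Option.mem_def]
  constructor
  · rintro ⟨o, ⟨p, hp, rfl⟩, ho⟩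
    rcases p with ⟨x | x, y | y⟩ <;> simp [proj, Prod.ext_iff] at ho
    · obtain ⟨rfl, rfl⟩ := ho; exact Or.inl hp
    · obtain ⟨rfl, rfl⟩ := ho; exact Or.inr hp
  · rintro (h | h)
    · exact ⟨some (a, b), ⟨_, h, rfl⟩, rfl⟩
    · exact ⟨some (a, b), ⟨_, h, rfl⟩, rfl⟩

end PrefSys

open PrefSys in
/-- let `M'` be a stable matching of `G'` and `M = T(M')`; give
each man `a` the value `f(a) = 0` iff `(a₁, d(a)) ∈ M'` and each woman `b` the
value `f(b) = 1` iff `M'(b)` is a level-1 man.  Then (1) every edge of `G`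
labeled `(+,+)` wrt `M` goes from a man with `f`-value 0 to a woman with
`f`-value 1, and (2) every edge of `G` from a man with `f`-value 1 to a woman
with `f`-value 0 is labeled `(-,-)` wrt `M`. -/
theorem aux_f_values {A B : Type} [Fintype A] [Fintype B]
    (P : PrefSys A B) (M' : Finset ((A ⊕ A) × (B ⊕ A)))
    (hM' : (P.aux).Stable M') :
    (∀ a b, P.Blocking (Tmap M') a b →
      (Sum.inr a, Sum.inr a) ∈ M' ∧ ∃ u, (Sum.inr u, Sum.inl b) ∈ M') ∧
    (∀ y z, P.adj y z → (Sum.inr y, Sum.inr y) ∉ M' →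
      (∀ u, (Sum.inr u, Sum.inl z) ∉ M') →
      ¬ P.voteAplus (Tmap M') y z ∧ ¬ P.voteBplus (Tmap M') y z) := by
  obtain ⟨⟨hAdj, hU1, hU2⟩, hStab⟩ := hM'
  -- every dummy woman d(a) is matched, to a₀ or a₁
  have hdum : ∀ a : A, (Sum.inl a, Sum.inr a) ∈ M' ∨ (Sum.inr a, Sum.inr a) ∈ M' := by
    intro a
    by_contra h
    push_neg at h
    obtain ⟨h0, h1⟩ := h
    refine hStab (Sum.inr a) (Sum.inr a) ⟨rfl, h1, ?_, ?_⟩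
    · intro w hw
      rcases w with b' | a'
      · rw [aux_rankA_rr, aux_rankA_rl]; omega
      · have ha : a' = a := hAdj _ hw
        subst ha
        exact absurd hw h1
    · intro x hx
      rcases x with a' | a'
      · have ha : a = a' := hAdj _ hx
        cases ha
        exact absurd hx h0
      · have ha : a = a' := hAdj _ hx
        cases ha
        exact absurd hx h1
  constructor
  · intro a b hblock
    obtain ⟨hab, hnotM, hvA, hvB⟩ := hblock
    -- part 1a : f(a) = 0, i.e. (a₁, d(a)) ∈ M'
    have hfa : (Sum.inr a, Sum.inr a) ∈ M' := by
      by_contra hfa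
      have hd : (Sum.inl a, Sum.inr a) ∈ M' := (hdum a).resolve_right hfa
      refine hStab (Sum.inr a) (Sum.inl b) ⟨hab, ?_, ?_, ?_⟩
      · intro h
        exact hnotM ((mem_Tmap M' a b).2 (Or.inr h))
      · intro w hw
        rcases w with b' | a'
        · rw [aux_rankA_rl, aux_rankA_rl]
          have := hvA b' ((mem_Tmap M' a b').2 (Or.inr hw))
          omega
        · have ha : a' = a := hAdj _ hw
          subst ha
          exact absurd hw hfa
      · intro x hx
        rcases x with u | u
        · rw [aux_rankB_lr, aux_rankB_ll]
          have := hvB u ((mem_Tmap M' u b).2 (Or.inl hx))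
          omega
        · rw [aux_rankB_lr, aux_rankB_lr]
          exact hvB u ((mem_Tmap M' u b).2 (Or.inr hx))
    refine ⟨hfa, ?_⟩
    -- part 1b : f(b) = 1, i.e. b's partner is a level-1 man
    by_contra hfb
    push_neg at hfb
    refine hStab (Sum.inl a) (Sum.inl b) ⟨hab, ?_, ?_, ?_⟩
    · intro h
      exact hnotM ((mem_Tmap M' a b).2 (Or.inl h))
    · intro w hw
      rcases w with b' | a'
      · rw [aux_rankA_ll, aux_rankA_ll]
        exact hvA b' ((mem_Tmap M' a b').2 (Or.inl hw))
      · have ha : a' = a := hAdj _ hw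
        subst ha
        -- (a₀, d(a)) ∈ M' and (a₁, d(a)) ∈ M' share the woman d(a)
        have := hU2 _ hw _ hfa rfl
        simp at this
    · intro x hx
      rcases x with u | u
      · rw [aux_rankB_ll, aux_rankB_ll]
        have := hvB u ((mem_Tmap M' u b).2 (Or.inl hx))
        omega
      · exact absurd hx (hfb u)
  · intro y z hadj hy1 hz
    have hd0 : (Sum.inl y, Sum.inr y) ∈ M' := (hdum y).resolve_right hy1
    constructor
    · intro hvA
      refine hStab (Sum.inr y) (Sum.inl z) ⟨hadj, hz y, ?_, ?_⟩
      · intro w hw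
        rcases w with b' | y'
        · rw [aux_rankA_rl, aux_rankA_rl]
          have := hvA b' ((mem_Tmap M' y b').2 (Or.inr hw))
          omega
        · have ha : y' = y := hAdj _ hw
          subst ha
          exact absurd hw hy1
      · intro x hx
        rcases x with u | u
        · rw [aux_rankB_lr, aux_rankB_ll]
          have := Finset.le_sup (f := P.rankB z) (Finset.mem_univ y)
          omega
        · exact absurd hx (hz u)
    · intro hvB
      refine hStab (Sum.inl y) (Sum.inl z) ⟨hadj, ?_, ?_, ?_⟩
      · intro h
        have := hU1 _ h _ hd0 rfl
        simp at this
      · intro w hw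
        rcases w with b' | y'
        · have := hU1 _ hw _ hd0 rfl
          simp at this
        · have ha : y' = y := hAdj _ hw
          subst ha
          rw [aux_rankA_ll, aux_rankA_lr]
          exact Nat.lt_succ_of_le (Finset.le_sup (Finset.mem_univ z))
      · intro x hx
        rcases x with u | u
        · rw [aux_rankB_ll, aux_rankB_ll]
          have := hvB u ((mem_Tmap M' u z).2 (Or.inl hx))
          omega
        · exact absurd hx (hz u)
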